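/- arXiv:2410.03050 — 2 statements merged into one kernel-verified Lean document; each statement's English description precedes it below -/
import Mathlib

section
/- Let (λ̂, r̂) ∈ ℝᵐ × (0, ∞) and let (x̂, t̂) ∈ A(λ̂, r̂) be a global minimizer of L̃_{λ̂,r̂}. Then t̂ = ‖h(x̂)‖; in particular, if t̂ = 0 then h(x̂) = 0. -/
noncomputable section

open Classical in
/-- The extended-real-valued smoothing function `L̃_{λ,r}(x,t)`. -/
def Ltilde {n m : ℕ} (f : EuclideanSpace ℝ (Fin n) → ℝ)
    (h : EuclideanSpace ℝ (Fin n) → EuclideanSpace ℝ (Fin m))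
    (lam : EuclideanSpace ℝ (Fin m)) (r : ℝ)
    (x : EuclideanSpace ℝ (Fin n)) (t : ℝ) : EReal :=
  if 0 < t then
    (((f x + (inner ℝ lam (h x) : ℝ) + r / (2 * t) * ‖h x‖ ^ 2 + r / 2 * t) : ℝ) : EReal)
  else if t = 0 ∧ h x = 0 then ((f x : ℝ) : EReal)
  else ⊤

/-- The augmented dual function `q̃(λ, r) = inf_{(x,t)} L̃_{λ,r}(x,t)`. -/
def qtilde {n m : ℕ} (f : EuclideanSpace ℝ (Fin n) → ℝ)
    (h : EuclideanSpace ℝ (Fin n) → EuclideanSpace ℝ (Fin m))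
    (lam : EuclideanSpace ℝ (Fin m)) (r : ℝ) : EReal :=
  ⨅ p : EuclideanSpace ℝ (Fin n) × ℝ, Ltilde f h lam r p.1 p.2

/-- The set `A(λ, r)` of global minimizers of `L̃_{λ,r}`. -/
def Aset {n m : ℕ} (f : EuclideanSpace ℝ (Fin n) → ℝ)
    (h : EuclideanSpace ℝ (Fin n) → EuclideanSpace ℝ (Fin m))
    (lam : EuclideanSpace ℝ (Fin m)) (r : ℝ) :
    Set (EuclideanSpace ℝ (Fin n) × ℝ) :=
  {p | Ltilde f h lam r p.1 p.2 = qtilde f h lam r}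

/-!
For fixed `x`, the only `t`-dependence of `L̃_{λ,r}(x,t)` for `t > 0` is `r‖h x‖²/(2t) + rt/2`,
which by AM–GM exceeds its value `r‖h x‖` at `t = ‖h x‖` by `r(‖h x‖ - t)²/(2t)`; for `t ≤ 0`,
`L̃` is finite only at `t = 0 = ‖h x‖`. So `t ↦ L̃_{λ,r}(x,t)` has the strict minimizer
`t = ‖h x‖`.
-/

open RealInnerProductSpace

lemma mul_lt_div_mul_sq_add_div_mul {r t a : ℝ} (hr : 0 < r) (ht : 0 < t) (hta : t ≠ a) :
    r * a < r / (2 * t) * a ^ 2 + r / 2 * t := by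
  have hsq : r / (2 * t) * a ^ 2 + r / 2 * t - r * a = r / (2 * t) * (a - t) ^ 2 := by
    field_simp
    ring
  have hpos : 0 < r / (2 * t) * (a - t) ^ 2 :=
    mul_pos (by positivity) (sq_pos_of_ne_zero (sub_ne_zero.mpr hta.symm))
  linarith

section Ltilde

variable {n m : ℕ} (f : EuclideanSpace ℝ (Fin n) → ℝ)
  (h : EuclideanSpace ℝ (Fin n) → EuclideanSpace ℝ (Fin m))
  (lam : EuclideanSpace ℝ (Fin m)) (r : ℝ) (x : EuclideanSpace ℝ (Fin n))

lemma Ltilde_of_pos {t : ℝ} (ht : 0 < t) :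
    Ltilde f h lam r x t = ((f x + ⟪lam, h x⟫ + r / (2 * t) * ‖h x‖ ^ 2 + r / 2 * t : ℝ) : EReal) :=
  if_pos ht

lemma Ltilde_of_neg {t : ℝ} (ht : t < 0) : Ltilde f h lam r x t = ⊤ := by
  simp [Ltilde, not_lt.mpr ht.le, ht.ne]

lemma Ltilde_zero_of_ne_zero (hx : h x ≠ 0) : Ltilde f h lam r x 0 = ⊤ := by
  simp [Ltilde, hx]

lemma Ltilde_norm : Ltilde f h lam r x ‖h x‖ = ((f x + ⟪lam, h x⟫ + r * ‖h x‖ : ℝ) : EReal) := by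
  rcases eq_or_ne (h x) 0 with hx | hx
  · simp [Ltilde, hx]
  · have ha : 0 < ‖h x‖ := norm_pos_iff.mpr hx
    rw [Ltilde_of_pos f h lam r x ha]
    congr 1
    field_simp
    ring

lemma Ltilde_norm_lt (hr : 0 < r) {t : ℝ} (ht : t ≠ ‖h x‖) :
    Ltilde f h lam r x ‖h x‖ < Ltilde f h lam r x t := by
  rw [Ltilde_norm]
  rcases lt_trichotomy t 0 with hneg | rfl | hpos
  · rw [Ltilde_of_neg f h lam r x hneg]
    exact EReal.coe_lt_top _
  · rw [Ltilde_zero_of_ne_zero f h lam r x (norm_ne_zero_iff.mp (Ne.symm ht))]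
    exact EReal.coe_lt_top _
  · rw [Ltilde_of_pos f h lam r x hpos, EReal.coe_lt_coe_iff]
    linarith [mul_lt_div_mul_sq_add_div_mul hr hpos ht]

lemma eq_norm_of_mem_Aset (hr : 0 < r) {t : ℝ} (hmem : (x, t) ∈ Aset f h lam r) :
    t = ‖h x‖ := by
  by_contra ht
  have hmin : Ltilde f h lam r x t ≤ Ltilde f h lam r x ‖h x‖ :=
    hmem.le.trans (iInf_le _ (x, ‖h x‖))
  exact (Ltilde_norm_lt f h lam r x hr ht).not_ge hmin

end Ltilde

theorem stmt1_general {n m : ℕ} (f : EuclideanSpace ℝ (Fin n) → ℝ)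
    (h : EuclideanSpace ℝ (Fin n) → EuclideanSpace ℝ (Fin m))
    (lamh : EuclideanSpace ℝ (Fin m)) (rh : ℝ) (hrh : 0 < rh)
    (xh : EuclideanSpace ℝ (Fin n)) (th : ℝ)
    (hmem : (xh, th) ∈ Aset f h lamh rh) :
    th = ‖h xh‖ ∧ (th = 0 → h xh = 0) := by
  have hth : th = ‖h xh‖ := eq_norm_of_mem_Aset f h lamh rh xh hrh hmem
  exact ⟨hth, fun h0 => norm_eq_zero.mp (hth ▸ h0)⟩

/-- if `(x̂, t̂)` is a global minimizer of `L̃_{λ̂,r̂}`, then `t̂ = ‖h x̂‖`;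
in particular, if `t̂ = 0` then `h x̂ = 0`. -/
theorem stmt1 {n m : ℕ} (f : EuclideanSpace ℝ (Fin n) → ℝ)
    (h : EuclideanSpace ℝ (Fin n) → EuclideanSpace ℝ (Fin m))
    (hf : ContDiff ℝ 2 f) (hh : ContDiff ℝ 2 h)
    (lamh : EuclideanSpace ℝ (Fin m)) (rh : ℝ) (hrh : 0 < rh)
    (xh : EuclideanSpace ℝ (Fin n)) (th : ℝ)
    (hmem : (xh, th) ∈ Aset f h lamh rh) :
    th = ‖h xh‖ ∧ (th = 0 → h xh = 0) :=
  stmt1_general f h lamh rh hrh xh th hmem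
end
end

section
/- Let sequences {xᵏ} ⊂ ℝⁿ, {λ̄ᵏ} ⊂ [λ_min, λ_max]ᵐ, {r_k} ⊂ (0, ∞), {t_k} ⊂ (0, ∞), {ε_k} with ε_k ↓ 0, and {s_k} ⊂ (0, ∞) bounded be generated by Algorithm 3: (x^{k+1}, t_{k+1}) ∈ ℝⁿ × (0, ∞) satisfies ‖∇L̂^{s_k}_{λ̄ᵏ, r_k}(x^{k+1}, t_{k+1})‖ ≤ ε_k; and r_{k+1} = r_k if ‖h(x^{k+1})‖ ≤ τ ‖h(xᵏ)‖, r_{k+1} = γ r_k otherwise, where 0 < τ < 1 and γ > 1. Let x̄ be a limit point of {xᵏ}. Then: (a) if {r_k} is bounded, x̄ is a stationary point of (NLP), i.e. h(x̄) = 0 and there exists μ ∈ ℝᵐ with ∇f(x̄) + ∇h(x̄) μ = 0; (b) if {r_k} is unbounded, ∇h(x̄) h(x̄) = 0. -/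
/-!
If `r_k` stays bounded, the penalty test can fail only finitely often, so eventually
`‖h(x^{k+1})‖ ≤ τ ‖h(x^k)‖` and `h(x^k) → 0` geometrically. The `t`-component of the gradient
estimate gives `(r_k / t_{k+1}) ‖h(x^{k+1})‖ ≤ r_k + 2 ε_k`, so the multiplier estimates
`λ̄^k + (r_k / t_{k+1}) h(x^{k+1})` stay bounded; as `∇f(x̄) + range ∇h(x̄)` is closed, the limit of
the `x`-components produces a multiplier at `x̄`.

If `r_k → ∞`, the `t`-component forces `t_{k+1}² ≤ 2 (‖h(x^{k+1})‖² + s_k²)`, which is bounded, so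
`t_{k+1} / r_k → 0`. Multiplying the `x`-component by `t_{k+1} / r_k` isolates
`∑ᵢ hᵢ ∇hᵢ (x^{k+1})`, which therefore tends to `0`.
-/

open Filter Topology Set Finset

theorem Real.abs_le_of_sqrt_sq_add_sq_le {x y ε : ℝ} (h : √(x ^ 2 + y ^ 2) ≤ ε) :
    |x| ≤ ε ∧ |y| ≤ ε :=
  ⟨(Real.abs_le_sqrt (le_add_of_nonneg_right (sq_nonneg y))).trans h,
    (Real.abs_le_sqrt (le_add_of_nonneg_left (sq_nonneg x))).trans h⟩

theorem ContDiff.continuous_gradient {F : Type*} [NormedAddCommGroup F] [InnerProductSpace ℝ F]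
    [CompleteSpace F] {f : F → ℝ} {k : WithTop ℕ∞} (hf : ContDiff ℝ k f) (hk : k ≠ 0) :
    Continuous (gradient f) :=
  (InnerProductSpace.toDual ℝ F).symm.continuous.comp (hf.continuous_fderiv hk)

theorem exists_tendsto_atTop_comp_add_one {X : Type*} [TopologicalSpace X] {u : ℕ → X} {x : X}
    {φ : ℕ → ℕ} (hφ : StrictMono φ) (hu : Tendsto (fun j => u (φ j)) atTop (𝓝 x)) :
    ∃ ψ : ℕ → ℕ, Tendsto ψ atTop atTop ∧ Tendsto (fun j => u (ψ j + 1)) atTop (𝓝 x) := by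
  have hφ1 (j : ℕ) : j + 1 ≤ φ (j + 1) := hφ.le_apply
  refine ⟨fun j => φ (j + 1) - 1,
    tendsto_atTop_mono (fun j => Nat.le_sub_one_of_lt (hφ1 j)) tendsto_id, ?_⟩
  refine (hu.comp (tendsto_add_atTop_nat 1)).congr fun j => ?_
  simp only [Function.comp_apply, Nat.sub_add_cancel (le_of_add_le_right (hφ1 j))]

section Multipliers

variable {α ι E : Type*} [Fintype ι] [NormedAddCommGroup E] [NormedSpace ℝ E] {l : Filter α}
  {a : α → E} {a₀ : E} {g : ι → α → E} {g₀ : ι → E}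

theorem exists_add_sum_smul_eq_zero_of_tendsto [l.NeBot] {μ : α → ι → ℝ}
    (ha : Tendsto a l (𝓝 a₀)) (hg : ∀ i, Tendsto (g i) l (𝓝 (g₀ i)))
    (hμ : ∀ i, IsBoundedUnder (· ≤ ·) l fun j => ‖μ j i‖)
    (hlim : Tendsto (fun j => a j + ∑ i, μ j i • g i j) l (𝓝 0)) :
    ∃ ν : ι → ℝ, a₀ + ∑ i, ν i • g₀ i = 0 := by
  set L := Fintype.linearCombination ℝ g₀
  have hdiff : Tendsto (fun j => ∑ i, μ j i • (g i j - g₀ i)) l (𝓝 0) := by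
    simpa using tendsto_finsetSum univ fun i _ =>
      (hμ i).smul_tendsto_zero (tendsto_sub_nhds_zero_iff.2 (hg i))
  have hL : Tendsto (fun j => L (μ j)) l (𝓝 (-a₀)) := by
    convert (hlim.sub ha).sub hdiff using 1
    · ext j
      simp only [L, Fintype.linearCombination_apply, smul_sub, Finset.sum_sub_distrib]
      abel
    · simp
  obtain ⟨ν, hν⟩ := (LinearMap.range L).closed_of_finiteDimensional.mem_of_tendsto hL
    (Eventually.of_forall fun j => LinearMap.mem_range_self L (μ j))
  refine ⟨ν, ?_⟩
  rw [← Fintype.linearCombination_apply, hν, add_neg_cancel]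

theorem tendsto_sum_smul_zero_of_tendsto_add_sum_smul {θ : α → ι → ℝ} {ρ : α → ℝ}
    {y : ι → α → ℝ} (ha : Tendsto a l (𝓝 a₀)) (hg : ∀ i, Tendsto (g i) l (𝓝 (g₀ i)))
    (hθ : ∀ i, IsBoundedUnder (· ≤ ·) l fun j => ‖θ j i‖) (hρ0 : ∀ j, ρ j ≠ 0)
    (hρ : Tendsto (fun j => (ρ j)⁻¹) l (𝓝 0))
    (hlim : Tendsto (fun j => a j + ∑ i, (θ j i + ρ j * y i j) • g i j) l (𝓝 0)) :
    Tendsto (fun j => ∑ i, y i j • g i j) l (𝓝 0) := by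
  have hθρ : Tendsto (fun j => ∑ i, ((ρ j)⁻¹ * θ j i) • g i j) l (𝓝 0) := by
    simpa using tendsto_finsetSum univ fun i _ =>
      (hρ.zero_mul_isBoundedUnder_le (hθ i)).smul (hg i)
  have hsum := ((hρ.smul hlim).sub (hρ.smul ha)).sub hθρ
  rw [smul_zero, zero_smul, sub_zero, sub_zero] at hsum
  refine hsum.congr fun j => ?_
  simp only [add_smul, Finset.sum_add_distrib, smul_add, add_sub_cancel_left, Finset.smul_sum,
    smul_smul, ← mul_assoc, inv_mul_cancel₀ (hρ0 j), one_mul]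

end Multipliers

-- The penalty update of Algorithm 3, with `v k = ‖h(x^k)‖`.
def IsPenaltyUpdate (τ γ : ℝ) (v r : ℕ → ℝ) : Prop :=
  ∀ k, r (k + 1) = if v (k + 1) ≤ τ * v k then r k else γ * r k

namespace IsPenaltyUpdate

variable {τ γ : ℝ} {v r : ℕ → ℝ}

theorem monotone (hpen : IsPenaltyUpdate τ γ v r) (hr : ∀ k, 0 ≤ r k) (hγ : 1 ≤ γ) :
    Monotone r :=
  monotone_nat_of_le_succ fun k => by
    rw [hpen k]
    split_ifs
    exacts [le_rfl, le_mul_of_one_le_left (hr k) hγ]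

theorem eventually_le_of_bddAbove (hpen : IsPenaltyUpdate τ γ v r) (hr : ∀ k, 0 < r k)
    (hγ : 1 < γ) (hB : BddAbove (range r)) : ∀ᶠ k in atTop, v (k + 1) ≤ τ * v k := by
  have hmono := hpen.monotone (fun k => (hr k).le) hγ.le
  have hL := tendsto_atTop_ciSup hmono hB
  have hstep : Tendsto (fun k => r (k + 1) - r k) atTop (𝓝 0) := by
    simpa using (hL.comp (tendsto_add_atTop_nat 1)).sub hL
  -- the steps of the convergent sequence `r` tend to `0`, while a failed test is a step of at
  -- least `(γ - 1) * r 0`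
  have hgap : 0 < (γ - 1) * r 0 := mul_pos (sub_pos.2 hγ) (hr 0)
  filter_upwards [hstep.eventually (gt_mem_nhds hgap)] with k hk
  by_contra hfail
  rw [hpen k, if_neg hfail] at hk
  nlinarith [hmono (Nat.zero_le k)]

theorem tendsto_zero_of_bddAbove {E : Type*} [NormedAddCommGroup E] [CompleteSpace E] {u : ℕ → E}
    (hpen : IsPenaltyUpdate τ γ (fun k => ‖u k‖) r) (hτ : τ < 1) (hr : ∀ k, 0 < r k)
    (hγ : 1 < γ) (hB : BddAbove (range r)) : Tendsto u atTop (𝓝 0) :=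
  (summable_of_ratio_norm_eventually_le hτ
    (hpen.eventually_le_of_bddAbove hr hγ hB)).tendsto_atTop_zero

theorem tendsto_atTop_of_not_bddAbove (hpen : IsPenaltyUpdate τ γ v r) (hr : ∀ k, 0 < r k)
    (hγ : 1 < γ) (hB : ¬BddAbove (range r)) : Tendsto r atTop atTop :=
  tendsto_atTop_atTop_of_monotone' (hpen.monotone (fun k => (hr k).le) hγ.le) hB

end IsPenaltyUpdate

section Barrier

-- `r / 2 * (1 - (c ^ 2 + s ^ 2) / t ^ 2)` is the `t`-component of `∇L̂ˢ_{λ,r}(x, t)`,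
-- with `c = ‖h(x)‖`.

variable {r t c s ε : ℝ}

theorem abs_mul_sq_sub_le_of_abs_barrier_le {A : ℝ} (ht : 0 < t)
    (h : |r / 2 * (1 - A / t ^ 2)| ≤ ε) : |r * (t ^ 2 - A)| ≤ 2 * ε * t ^ 2 := by
  have hform : r / 2 * (1 - A / t ^ 2) = r * (t ^ 2 - A) / (2 * t ^ 2) := by
    field_simp
  rw [hform, abs_div, abs_of_pos (by positivity : (0 : ℝ) < 2 * t ^ 2),
    div_le_iff₀ (by positivity)] at h
  linarith

theorem div_mul_le_add_of_abs_barrier_le (hr : 0 < r) (ht : 0 < t) (hc : 0 ≤ c)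
    (h : |r / 2 * (1 - (c ^ 2 + s ^ 2) / t ^ 2)| ≤ ε) : r / t * c ≤ r + 2 * ε := by
  have hε : 0 ≤ ε := (abs_nonneg _).trans h
  have hres := abs_le.1 (abs_mul_sq_sub_le_of_abs_barrier_le ht h)
  have hc2 : r * c ^ 2 ≤ (r + 2 * ε) * t ^ 2 := by
    nlinarith [mul_nonneg hr.le (sq_nonneg s)]
  have hsq : (r * c) ^ 2 ≤ ((r + 2 * ε) * t) ^ 2 := by
    nlinarith [mul_le_mul_of_nonneg_left hc2 hr.le, mul_nonneg hε (sq_nonneg t)]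
  have hrc : r * c ≤ (r + 2 * ε) * t :=
    (pow_le_pow_iff_left₀ (by positivity) (by positivity) two_ne_zero).1 hsq
  rw [div_mul_eq_mul_div, div_le_iff₀ ht]
  exact hrc

theorem sq_le_two_mul_of_abs_barrier_le (hr : 0 < r) (ht : 0 < t) (hεr : 4 * ε ≤ r)
    (h : |r / 2 * (1 - (c ^ 2 + s ^ 2) / t ^ 2)| ≤ ε) : t ^ 2 ≤ 2 * (c ^ 2 + s ^ 2) := by
  have hres := abs_le.1 (abs_mul_sq_sub_le_of_abs_barrier_le ht h)
  nlinarith [sq_nonneg t]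


end Barrier

section BarrierSequences

variable {α : Type*} {l : Filter α} {r t c s ε : α → ℝ}

theorem isBoundedUnder_abs_add_div_mul_of_abs_barrier_le {θ y : α → ℝ}
    (hθ : IsBoundedUnder (· ≤ ·) l fun j => |θ j|) (hr : IsBoundedUnder (· ≤ ·) l r)
    (hε : IsBoundedUnder (· ≤ ·) l ε) (hr0 : ∀ j, 0 < r j) (ht : ∀ j, 0 < t j)
    (hy : ∀ j, |y j| ≤ c j)
    (hres : ∀ j, |r j / 2 * (1 - (c j ^ 2 + s j ^ 2) / t j ^ 2)| ≤ ε j) :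
    IsBoundedUnder (· ≤ ·) l fun j => |θ j + r j / t j * y j| := by
  obtain ⟨Θ, hΘ : ∀ᶠ j in l, |θ j| ≤ Θ⟩ := hθ
  obtain ⟨R, hR : ∀ᶠ j in l, r j ≤ R⟩ := hr
  obtain ⟨M, hM : ∀ᶠ j in l, ε j ≤ M⟩ := hε
  refine ⟨Θ + (R + 2 * M), eventually_map.2 ?_⟩
  filter_upwards [hΘ, hR, hM] with j hθj hrj hεj
  have hpen : r j / t j * |y j| ≤ r j + 2 * ε j :=
    (mul_le_mul_of_nonneg_left (hy j) (div_pos (hr0 j) (ht j)).le).trans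
      (div_mul_le_add_of_abs_barrier_le (hr0 j) (ht j) ((abs_nonneg _).trans (hy j)) (hres j))
  calc |θ j + r j / t j * y j| ≤ |θ j| + r j / t j * |y j| :=
        (abs_add_le _ _).trans_eq (by rw [abs_mul, abs_of_pos (div_pos (hr0 j) (ht j))])
    _ ≤ Θ + (R + 2 * M) := by linarith

theorem tendsto_div_zero_of_abs_barrier_le (hr : Tendsto r l atTop) (ht : ∀ j, 0 < t j)
    (hε : Tendsto ε l (𝓝 0)) (hcs : IsBoundedUnder (· ≤ ·) l fun j => c j ^ 2 + s j ^ 2)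
    (hres : ∀ j, |r j / 2 * (1 - (c j ^ 2 + s j ^ 2) / t j ^ 2)| ≤ ε j) :
    Tendsto (fun j => t j / r j) l (𝓝 0) := by
  obtain ⟨M, hM : ∀ᶠ j in l, c j ^ 2 + s j ^ 2 ≤ M⟩ := hcs
  have hr0 := hr.eventually_gt_atTop 0
  have hεr : ∀ᶠ j in l, 4 * ε j ≤ r j := by
    filter_upwards [hε.eventually (ge_mem_nhds one_pos), hr.eventually_ge_atTop 4] with j h1 h4
    linarith
  refine squeeze_zero' ?_ ?_ (tendsto_const_nhds (x := √(2 * M)) |>.div_atTop hr)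
  · filter_upwards [hr0] with j hj using (div_pos (ht j) hj).le
  · filter_upwards [hr0, hεr, hM] with j hrj hεrj hMj
    refine div_le_div_of_nonneg_right (Real.le_sqrt_of_sq_le ?_) hrj.le
    exact (sq_le_two_mul_of_abs_barrier_le hrj (ht j) hεrj (hres j)).trans (by linarith)

end BarrierSequences

theorem stmt17_general {n m : ℕ} (f : EuclideanSpace ℝ (Fin n) → ℝ)
    (h : EuclideanSpace ℝ (Fin n) → EuclideanSpace ℝ (Fin m))
    (hf : ContDiff ℝ 2 f) (hh : ContDiff ℝ 2 h)
    (lammin lammax τ γ : ℝ)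
    (hτ1 : τ < 1) (hγ : 1 < γ)
    (x : ℕ → EuclideanSpace ℝ (Fin n)) (lamb : ℕ → EuclideanSpace ℝ (Fin m))
    (rr t eps s : ℕ → ℝ)
    (hbox : ∀ k i, lammin ≤ lamb k i ∧ lamb k i ≤ lammax)
    (hrpos : ∀ k, 0 < rr k)
    (hepslim : Tendsto eps atTop (nhds 0))
    (hspos : ∀ k, 0 < s k) (hsbdd : ∃ S, ∀ k, s k ≤ S)
    (hstat : ∀ k, 0 < t (k + 1) ∧
      Real.sqrt
        (‖gradient f (x (k + 1)) +
            ∑ i, (lamb k i + (rr k / t (k + 1)) * h (x (k + 1)) i) •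
              gradient (fun y => h y i) (x (k + 1))‖ ^ 2 +
          ((rr k / 2) *
            (1 - (‖h (x (k + 1))‖ ^ 2 + s k ^ 2) / t (k + 1) ^ 2)) ^ 2) ≤ eps k)
    (hpen : ∀ k, rr (k + 1) =
      if ‖h (x (k + 1))‖ ≤ τ * ‖h (x k)‖ then rr k else γ * rr k)
    (xbar : EuclideanSpace ℝ (Fin n)) (φ : ℕ → ℕ) (hφ : StrictMono φ)
    (hlim : Tendsto (fun j => x (φ j)) atTop (nhds xbar)) :
    ((∃ B, ∀ k, rr k ≤ B) →
      h xbar = 0 ∧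
      ∃ μ : EuclideanSpace ℝ (Fin m),
        gradient f xbar + ∑ i, μ i • gradient (fun y => h y i) xbar = 0) ∧
    ((¬ ∃ B, ∀ k, rr k ≤ B) →
      ∑ i, h xbar i • gradient (fun y => h y i) xbar = 0) := by
  have hpen' : IsPenaltyUpdate τ γ (fun k => ‖h (x k)‖) rr := hpen
  have hres k := Real.abs_le_of_sqrt_sq_add_sq_le (hstat k).2
  obtain ⟨ψ, hψ, hxψ⟩ := exists_tendsto_atTop_comp_add_one hφ hlim
  have hgf := ((hf.continuous_gradient two_ne_zero).tendsto xbar).comp hxψ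
  have hgh i :=
    ((((contDiff_piLp 2).1 hh i).continuous_gradient two_ne_zero).tendsto xbar).comp hxψ
  have hhx := (hh.continuous.tendsto xbar).comp hxψ
  have hεψ := hepslim.comp hψ
  have hG := squeeze_zero_norm (fun j => (le_abs_self _).trans (hres (ψ j)).1) hεψ
  have hθ i : IsBoundedUnder (· ≤ ·) atTop fun j => ‖lamb (ψ j) i‖ :=
    isBoundedUnder_of ⟨_, fun j => abs_le_max_abs_abs (hbox _ i).1 (hbox _ i).2⟩
  refine ⟨fun ⟨B, hB⟩ => ⟨?_, ?_⟩, fun hB => ?_⟩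
  · exact tendsto_nhds_unique ((hh.continuous.tendsto xbar).comp hlim)
      ((hpen'.tendsto_zero_of_bddAbove hτ1 hrpos hγ ⟨B, forall_mem_range.2 hB⟩).comp
        hφ.tendsto_atTop)
  · have hμ i := isBoundedUnder_abs_add_div_mul_of_abs_barrier_le
      (y := fun j => h (x (ψ j + 1)) i) (hθ i) (isBoundedUnder_of ⟨B, fun j => hB (ψ j)⟩)
      hεψ.isBoundedUnder_le (fun j => hrpos (ψ j)) (fun j => (hstat (ψ j)).1)
      (fun j => PiLp.norm_apply_le (h (x (ψ j + 1))) i) (fun j => (hres (ψ j)).2)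
    obtain ⟨ν, hν⟩ := exists_add_sum_smul_eq_zero_of_tendsto hgf hgh hμ hG
    exact ⟨WithLp.toLp 2 ν, hν⟩
  · have hr := hpen'.tendsto_atTop_of_not_bddAbove hrpos hγ
      fun ⟨B, hB'⟩ => hB ⟨B, fun k => hB' (mem_range_self k)⟩
    obtain ⟨S, hS⟩ := hsbdd
    have hcs : IsBoundedUnder (· ≤ ·) atTop fun j => ‖h (x (ψ j + 1))‖ ^ 2 + s (ψ j) ^ 2 :=
      isBoundedUnder_le_add (hhx.norm.pow 2).isBoundedUnder_le
        (isBoundedUnder_of ⟨S ^ 2, fun j => pow_le_pow_left₀ (hspos _).le (hS _) 2⟩)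
    have hq := tendsto_div_zero_of_abs_barrier_le (hr.comp hψ) (fun j => (hstat (ψ j)).1) hεψ
      hcs (fun j => (hres (ψ j)).2)
    refine tendsto_nhds_unique ?_ (tendsto_sum_smul_zero_of_tendsto_add_sum_smul hgf hgh hθ
      (fun j => (div_pos (hrpos (ψ j)) (hstat (ψ j)).1).ne')
      (by simpa only [inv_div, Function.comp_apply] using hq) hG)
    exact tendsto_finsetSum _ fun i _ =>
      ((PiLp.continuous_apply 2 _ i).tendsto _ |>.comp hhx).smul (hgh i)

/-- Algorithm 3 (varying smoothing parameter). Let `x̄` be a limit point of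
`{xᵏ}`. (a) If `{r_k}` is bounded, `x̄` is a stationary point of the NLP: `h x̄ = 0` and
`∇f(x̄) + ∇h(x̄) μ = 0` for some `μ`. (b) If `{r_k}` is unbounded, `∇h(x̄) h(x̄) = 0`. -/
theorem stmt17 {n m : ℕ} (f : EuclideanSpace ℝ (Fin n) → ℝ)
    (h : EuclideanSpace ℝ (Fin n) → EuclideanSpace ℝ (Fin m))
    (hf : ContDiff ℝ 2 f) (hh : ContDiff ℝ 2 h)
    (lammin lammax τ γ : ℝ) (hlm : lammin < lammax)
    (hτ0 : 0 < τ) (hτ1 : τ < 1) (hγ : 1 < γ)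
    (x : ℕ → EuclideanSpace ℝ (Fin n)) (lamb : ℕ → EuclideanSpace ℝ (Fin m))
    (rr t eps s : ℕ → ℝ)
    (hbox : ∀ k i, lammin ≤ lamb k i ∧ lamb k i ≤ lammax)
    (hrpos : ∀ k, 0 < rr k)
    (hepspos : ∀ k, 0 < eps k) (hepsanti : Antitone eps)
    (hepslim : Tendsto eps atTop (nhds 0))
    (hspos : ∀ k, 0 < s k) (hsbdd : ∃ S, ∀ k, s k ≤ S)
    (hstat : ∀ k, 0 < t (k + 1) ∧
      Real.sqrt
        (‖gradient f (x (k + 1)) +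
            ∑ i, (lamb k i + (rr k / t (k + 1)) * h (x (k + 1)) i) •
              gradient (fun y => h y i) (x (k + 1))‖ ^ 2 +
          ((rr k / 2) *
            (1 - (‖h (x (k + 1))‖ ^ 2 + s k ^ 2) / t (k + 1) ^ 2)) ^ 2) ≤ eps k)
    (hpen : ∀ k, rr (k + 1) =
      if ‖h (x (k + 1))‖ ≤ τ * ‖h (x k)‖ then rr k else γ * rr k)
    (xbar : EuclideanSpace ℝ (Fin n)) (φ : ℕ → ℕ) (hφ : StrictMono φ)
    (hlim : Tendsto (fun j => x (φ j)) atTop (nhds xbar)) :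
    ((∃ B, ∀ k, rr k ≤ B) →
      h xbar = 0 ∧
      ∃ μ : EuclideanSpace ℝ (Fin m),
        gradient f xbar + ∑ i, μ i • gradient (fun y => h y i) xbar = 0) ∧
    ((¬ ∃ B, ∀ k, rr k ≤ B) →
      ∑ i, h xbar i • gradient (fun y => h y i) xbar = 0) :=
  stmt17_general f h hf hh lammin lammax τ γ hτ1 hγ x lamb rr t eps s hbox hrpos hepslim hspos hsbdd
    hstat hpen xbar φ hφ hlim
end
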